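/- In the universal cover of a closed Riemannian manifold with infinite fundamental group (in particular, if the universal cover is non-compact), there exists a geodesic line σ : ℝ → Ñ, i.e., a curve with d(σ(t₁), σ(t₂)) = |t₂ − t₁| for all t₁, t₂ ∈ ℝ. -/

import Mathlib

/-!
Since `X` is proper and non-compact it is unbounded, so it contains geodesic segments of every
length. Translating the midpoint of a segment of length `2n` into the compact set `K` meeting
every orbit gives maps `δ n` that are isometric on `[-n, n]` and have `δ n 0` in a fixed bounded
set. For each `t` the points `δ n t` then stay in a fixed closed ball, so they converge along an
ultrafilter finer than `atTop`; the pointwise limit is a geodesic line.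
-/

open Set Filter Topology Metric

variable {X : Type*} [MetricSpace X]

def IsGeodesicOn (γ : ℝ → X) (s : Set ℝ) : Prop :=
  ∀ a ∈ s, ∀ b ∈ s, dist (γ a) (γ b) = |b - a|

theorem exists_lt_dist_of_not_compactSpace [ProperSpace X] (h : ¬CompactSpace X) (x : X)
    (r : ℝ) : ∃ y, r < dist x y := by
  by_contra! hr
  exact h <| compactSpace_iff_isBounded_univ.2 <|
    (isBounded_iff_subset_closedBall x).2 ⟨r, fun y _ => mem_closedBall'.2 (hr y)⟩

theorem IsGeodesicOn.exists_translate_midpoint_mem {G : Type*} [Group G] [MulAction G X]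
    (hiso : ∀ g : G, Isometry (fun x : X => g • x)) {K : Set X}
    (hK : ∀ x : X, ∃ g : G, g • x ∈ K) {γ : ℝ → X} {d r : ℝ} (hγ : IsGeodesicOn γ (Icc 0 d))
    (hr : 2 * r ≤ d) : ∃ δ : ℝ → X, δ 0 ∈ K ∧ IsGeodesicOn δ (Icc (-r) r) := by
  obtain ⟨g, hg⟩ := hK (γ (d / 2))
  refine ⟨fun t => g • γ (d / 2 + t), by simpa using hg, fun a ha b hb => ?_⟩
  have shift_mem : ∀ t ∈ Icc (-r) r, d / 2 + t ∈ Icc 0 d := fun t ht =>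
    ⟨by linarith [ht.1], by linarith [ht.2]⟩
  rw [(hiso g).dist_eq, hγ _ (shift_mem a ha) _ (shift_mem b hb)]
  ring_nf

theorem exists_isGeodesicOn_univ_of_segments [ProperSpace X] (δ : ℕ → ℝ → X)
    (hbdd : Bornology.IsBounded (range fun n => δ n 0))
    (hδ : ∀ n : ℕ, IsGeodesicOn (δ n) (Icc (-n) n)) : ∃ σ : ℝ → X, IsGeodesicOn σ univ := by
  obtain ⟨R, hR⟩ := (isBounded_iff_subset_closedBall (δ 0 0)).1 hbdd
  have eventually_mem_Icc : ∀ t : ℝ, ∀ᶠ n : ℕ in atTop, t ∈ Icc (-(n : ℝ)) n := fun t =>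
    (eventually_ge_atTop ⌈|t|⌉₊).mono fun n hn =>
      abs_le.1 ((Nat.le_ceil _).trans (Nat.cast_le.2 hn))
  have eventually_dist_eq : ∀ a b : ℝ,
      ∀ᶠ n : ℕ in atTop, dist (δ n a) (δ n b) = |b - a| := fun a b =>
    (eventually_mem_Icc a).and (eventually_mem_Icc b) |>.mono fun n hn => hδ n a hn.1 b hn.2
  let U : Ultrafilter ℕ := .of atTop
  have hU : (U : Filter ℕ) ≤ atTop := Ultrafilter.of_le _
  have converges : ∀ t : ℝ, ∃ a, Tendsto (fun n => δ n t) U (𝓝 a) := fun t => by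
    have bounded : ∀ᶠ n in U, δ n t ∈ closedBall (δ 0 0) (|t| + R) :=
      hU <| (eventually_dist_eq 0 t).mono fun n hn => mem_closedBall.2 <| by
        calc dist (δ n t) (δ 0 0) ≤ dist (δ n 0) (δ n t) + dist (δ n 0) (δ 0 0) :=
              dist_triangle_left _ _ _
          _ ≤ |t| + R := by
            rw [hn, sub_zero]
            exact add_le_add_right (mem_closedBall.1 (hR (mem_range_self n))) _
    obtain ⟨a, -, ha⟩ := (isCompact_closedBall _ _).ultrafilter_le_nhds (U.map _)
      (le_principal_iff.2 bounded)
    exact ⟨a, ha⟩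
  choose σ hσ using converges
  exact ⟨σ, fun a _ b _ => tendsto_nhds_unique ((hσ a).dist (hσ b))
    (tendsto_const_nhds.congr' (EventuallyEq.symm (hU (eventually_dist_eq a b))))⟩

/-- Let `X` be a proper geodesic metric space (e.g. the universal cover
of a closed Riemannian manifold with its pullback metric) which is non-compact, on which
a group `G` acts by isometries cocompactly (as the deck group does).  Then there exists a
geodesic line `σ : ℝ → X`, i.e. `dist (σ t₁) (σ t₂) = |t₂ - t₁|` for all `t₁ t₂ : ℝ`. -/
theorem exists_geodesic_line_of_cocompact_noncompact
    (X : Type) [MetricSpace X] [ProperSpace X] [Nonempty X]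
    (G : Type) [Group G] [MulAction G X]
    (hiso : ∀ g : G, Isometry (fun x : X => g • x))
    (hcocompact : ∃ K : Set X, IsCompact K ∧ ∀ x : X, ∃ g : G, g • x ∈ K)
    (hgeodesic : ∀ x y : X, ∃ γ : ℝ → X, γ 0 = x ∧ γ (dist x y) = y ∧
      ∀ s ∈ Set.Icc (0:ℝ) (dist x y), ∀ t ∈ Set.Icc (0:ℝ) (dist x y),
        dist (γ s) (γ t) = |t - s|)
    (hnoncompact : ¬ CompactSpace X) :
    ∃ σ : ℝ → X, ∀ t₁ t₂ : ℝ, dist (σ t₁) (σ t₂) = |t₂ - t₁| := by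
  obtain ⟨K, hK, hKcover⟩ := hcocompact
  obtain ⟨x₀⟩ := ‹Nonempty X›
  have segment : ∀ n : ℕ, ∃ δ : ℝ → X, δ 0 ∈ K ∧ IsGeodesicOn δ (Icc (-n) n) := fun n => by
    obtain ⟨y, hy⟩ := exists_lt_dist_of_not_compactSpace hnoncompact x₀ (2 * n)
    obtain ⟨γ, -, -, hγ⟩ := hgeodesic x₀ y
    exact IsGeodesicOn.exists_translate_midpoint_mem hiso hKcover hγ hy.le
  choose δ hδK hδ using segment
  obtain ⟨σ, hσ⟩ := exists_isGeodesicOn_univ_of_segments δ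
    (hK.isBounded.subset (range_subset_iff.2 hδK)) hδ
  exact ⟨σ, fun t₁ t₂ => hσ t₁ trivial t₂ trivial⟩
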